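/- Let p ∈ ℝ, c ∈ ℝ, and let r̂ : ℝ → ℝ be bounded and measurable. Then the expected profit can be rewritten by conditioning on consumers' valuations: Π(p, r̂, c) = ∫_c^∞ (p − E[r̂ ∥ v_i])·φ((θ−v_i)/σ)/σ dv_i. -/

import Mathlib

noncomputable section

open MeasureTheory Real Set Filter

/-- standard normal pdf φ -/
def stdPdf (x : ℝ) : ℝ := (Real.sqrt (2 * Real.pi))⁻¹ * Real.exp (-(x ^ 2) / 2)

/-- standard normal cdf Φ -/
def stdCdf (x : ℝ) : ℝ := ∫ t in Set.Iic x, stdPdf t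

/-- posterior expected reward  E[r ‖ x] = ∫ r(v) φ((v-μ_x)/σ_v)/σ_v dv, where
    μ_x = τ x + (1-τ) θ, τ = σθ²/(σε²+σθ²), σ_v = σε σθ / √(σε²+σθ²). -/
def postReward (θ σε σθ : ℝ) (r : ℝ → ℝ) (x : ℝ) : ℝ :=
  ∫ v, r v * stdPdf ((v - (σθ ^ 2 / (σε ^ 2 + σθ ^ 2) * x +
      (1 - σθ ^ 2 / (σε ^ 2 + σθ ^ 2)) * θ)) / (σε * σθ / Real.sqrt (σε ^ 2 + σθ ^ 2))) /
    (σε * σθ / Real.sqrt (σε ^ 2 + σθ ^ 2))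

/-- expected profit  Π(p, r, c) = ∫ (p - r(v)) Φ((v-c)/σε) φ((θ-v)/σθ)/σθ dv. -/
def profit (θ σε σθ : ℝ) (p : ℝ) (r : ℝ → ℝ) (c : ℝ) : ℝ :=
  ∫ v, (p - r v) * stdCdf ((v - c) / σε) * stdPdf ((θ - v) / σθ) / σθ

lemma stdPdf_pos (x : ℝ) : 0 < stdPdf x := by
  unfold stdPdf
  positivity

lemma continuous_stdPdf : Continuous stdPdf := by
  unfold stdPdf; fun_prop

lemma integrable_stdPdf : Integrable stdPdf := by
  have h : Integrable (fun x : ℝ => Real.exp (-(2⁻¹:ℝ) * x ^ 2)) := integrable_exp_neg_mul_sq (by norm_num)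
  have h2 : stdPdf = fun x => (Real.sqrt (2 * Real.pi))⁻¹ * Real.exp (-(2⁻¹:ℝ) * x ^ 2) := by
    funext x; unfold stdPdf; congr 1; ring_nf
  rw [h2]; exact h.const_mul _

lemma integral_stdPdf : ∫ x, stdPdf x = 1 := by
  have h2 : stdPdf = fun x => (Real.sqrt (2 * Real.pi))⁻¹ * Real.exp (-(2⁻¹:ℝ) * x ^ 2) := by
    funext x; unfold stdPdf; congr 1; ring_nf
  rw [h2, integral_const_mul, integral_gaussian]
  rw [show (π / 2⁻¹ : ℝ) = 2 * π by ring]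
  rw [inv_mul_cancel₀ (by positivity)]

lemma measurableEmbedding_affine {a : ℝ} (b : ℝ) (ha : a ≠ 0) :
    MeasurableEmbedding (fun x : ℝ => a * x + b) :=
  ((Homeomorph.mulLeft₀ a ha).trans (Homeomorph.addRight b)).measurableEmbedding

lemma map_volume_affine {a : ℝ} (b : ℝ) (ha : a ≠ 0) :
    Measure.map (fun x : ℝ => a * x + b) volume = ENNReal.ofReal |a⁻¹| • volume := by
  have h : (fun x : ℝ => a * x + b) = (fun x => x + b) ∘ (fun x => a * x) := rfl
  rw [h, ← Measure.map_map (measurable_add_const b) (measurable_const_mul a),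
    Real.map_volume_mul_left ha, Measure.map_smul, map_add_right_eq_self]

lemma setIntegral_comp_affine (f : ℝ → ℝ) {a : ℝ} (b : ℝ) (ha : a ≠ 0) (s : Set ℝ) :
    ∫ x in (fun x => a * x + b) ⁻¹' s, f (a * x + b) = |a|⁻¹ * ∫ y in s, f y := by
  have h := (measurableEmbedding_affine b ha).setIntegral_map (μ := volume) f s
  rw [map_volume_affine b ha, Measure.restrict_smul, integral_smul_measure,
    ENNReal.toReal_ofReal (abs_nonneg _)] at h
  rw [← h, smul_eq_mul, abs_inv]

lemma integral_comp_affine (f : ℝ → ℝ) {a : ℝ} (b : ℝ) (ha : a ≠ 0) :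
    ∫ x, f (a * x + b) = |a|⁻¹ * ∫ y, f y := by
  simpa using setIntegral_comp_affine f b ha univ

lemma integrable_comp_affine {f : ℝ → ℝ} (hf : Integrable f) {a : ℝ} (b : ℝ) (ha : a ≠ 0) :
    Integrable (fun x => f (a * x + b)) := by
  have h := (measurableEmbedding_affine b ha).integrable_map_iff (g := f) (μ := volume)
  rw [map_volume_affine b ha] at h
  exact h.mp ((integrable_smul_measure (by simp [ha]) ENNReal.ofReal_ne_top).mpr hf)

lemma integrable_gpdf {s : ℝ} (hs : 0 < s) (m : ℝ) :
    Integrable (fun x => stdPdf ((x - m) / s) / s) := by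
  have h : ∀ x : ℝ, (x - m) / s = s⁻¹ * x + -(m / s) := by
    intro x; field_simp; ring
  simp_rw [h]
  exact (integrable_comp_affine integrable_stdPdf _ (inv_ne_zero hs.ne')).div_const s

lemma integral_gpdf {s : ℝ} (hs : 0 < s) (m : ℝ) :
    ∫ x, stdPdf ((x - m) / s) / s = 1 := by
  have h : ∀ x : ℝ, (x - m) / s = s⁻¹ * x + -(m / s) := by
    intro x; field_simp; ring
  simp_rw [h]
  rw [integral_div, integral_comp_affine stdPdf _ (inv_ne_zero hs.ne'), integral_stdPdf,
    abs_of_pos (inv_pos.mpr hs), inv_inv, mul_one, div_self hs.ne']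

lemma gauss_prod {θ σε σθ σ : ℝ} (hσε : 0 < σε) (hσθ : 0 < σθ)
    (hσ : σ = Real.sqrt (σε ^ 2 + σθ ^ 2)) (x v : ℝ) :
    stdPdf ((v - x) / σε) / σε * (stdPdf ((θ - v) / σθ) / σθ) =
    stdPdf ((θ - x) / σ) / σ *
      (stdPdf ((v - (σθ ^ 2 / (σε ^ 2 + σθ ^ 2) * x +
        (1 - σθ ^ 2 / (σε ^ 2 + σθ ^ 2)) * θ)) / (σε * σθ / σ)) / (σε * σθ / σ)) := by
  have hσpos : 0 < σ := by rw [hσ]; positivity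
  have hσ2 : σ ^ 2 = σε ^ 2 + σθ ^ 2 := by
    rw [hσ]; exact Real.sq_sqrt (by positivity)
  have key : ((v - x) / σε) ^ 2 + ((θ - v) / σθ) ^ 2 =
      ((θ - x) / σ) ^ 2 + ((v - (σθ ^ 2 / (σε ^ 2 + σθ ^ 2) * x +
        (1 - σθ ^ 2 / (σε ^ 2 + σθ ^ 2)) * θ)) / (σε * σθ / σ)) ^ 2 := by
    have hε : σε ^ 2 ≠ 0 := by positivity
    have hθ' : σθ ^ 2 ≠ 0 := by positivity
    have hs' : σε ^ 2 + σθ ^ 2 ≠ 0 := by positivity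
    simp only [div_pow, mul_pow]
    rw [hσ2]
    field_simp
    ring
  unfold stdPdf
  have hexp : Real.exp (-((v - x) / σε) ^ 2 / 2) * Real.exp (-((θ - v) / σθ) ^ 2 / 2) =
      Real.exp (-((θ - x) / σ) ^ 2 / 2) *
        Real.exp (-((v - (σθ ^ 2 / (σε ^ 2 + σθ ^ 2) * x +
          (1 - σθ ^ 2 / (σε ^ 2 + σθ ^ 2)) * θ)) / (σε * σθ / σ)) ^ 2 / 2) := by
    rw [← Real.exp_add, ← Real.exp_add]
    congr 1
    linarith [key]
  have hss : σ * (σε * σθ / σ) = σε * σθ := by field_simp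
  set C := (Real.sqrt (2 * Real.pi))⁻¹ with hC
  calc C * Real.exp (-((v - x) / σε) ^ 2 / 2) / σε *
        (C * Real.exp (-((θ - v) / σθ) ^ 2 / 2) / σθ)
      = C * C * (Real.exp (-((v - x) / σε) ^ 2 / 2) *
          Real.exp (-((θ - v) / σθ) ^ 2 / 2)) / (σε * σθ) := by ring
    _ = C * C * (Real.exp (-((θ - x) / σ) ^ 2 / 2) *
          Real.exp (-((v - (σθ ^ 2 / (σε ^ 2 + σθ ^ 2) * x +
            (1 - σθ ^ 2 / (σε ^ 2 + σθ ^ 2)) * θ)) / (σε * σθ / σ)) ^ 2 / 2)) /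
          (σ * (σε * σθ / σ)) := by rw [hexp, hss]
    _ = _ := by ring

lemma stdCdf_eq_setIntegral {σε : ℝ} (hσε : 0 < σε) (v c : ℝ) :
    stdCdf ((v - c) / σε) = ∫ x in Ioi c, stdPdf ((v - x) / σε) / σε := by
  have ha : (-σε⁻¹ : ℝ) ≠ 0 := by simp [hσε.ne']
  have harg : ∀ x : ℝ, -σε⁻¹ * x + v / σε = (v - x) / σε := by
    intro x; field_simp; ring
  have hset : (fun x : ℝ => -σε⁻¹ * x + v / σε) ⁻¹' (Iio ((v - c) / σε)) = Ioi c := by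
    ext x
    simp only [mem_preimage, mem_Iio, mem_Ioi]
    rw [harg x, div_lt_div_iff_of_pos_right hσε, sub_lt_sub_iff_left]
  have h := setIntegral_comp_affine stdPdf (v / σε) ha (Iio ((v - c) / σε))
  rw [hset] at h
  simp_rw [harg] at h
  rw [setIntegral_congr_set Iio_ae_eq_Iic] at h
  rw [integral_div, h, stdCdf]
  rw [abs_neg, abs_inv, abs_of_pos hσε, inv_inv]
  field_simp

lemma stdCdf_nonneg (x : ℝ) : 0 ≤ stdCdf x :=
  integral_nonneg fun t => (stdPdf_pos t).le

lemma stdCdf_le_one (x : ℝ) : stdCdf x ≤ 1 := by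
  rw [stdCdf, ← integral_stdPdf]
  exact setIntegral_le_integral integrable_stdPdf (ae_of_all _ fun t => (stdPdf_pos t).le)

set_option maxHeartbeats 1000000 in
/-- the expected profit rewritten by conditioning on consumers' valuations:
    Π(p, r, c) = ∫_c^∞ (p - E[r ‖ vᵢ])·φ((θ-vᵢ)/σ)/σ dvᵢ. -/
theorem stmt_17 (θ σε σθ : ℝ) (hσε : 0 < σε) (hσθ : 0 < σθ)
    (σ : ℝ) (hσ : σ = Real.sqrt (σε ^ 2 + σθ ^ 2))
    (p c : ℝ) (r : ℝ → ℝ) (hmeas : Measurable r) (hbdd : ∃ M, ∀ v, |r v| ≤ M) :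
    profit θ σε σθ p r c =
      ∫ vi in Set.Ioi c,
        (p - postReward θ σε σθ r vi) * stdPdf ((θ - vi) / σ) / σ := by
  obtain ⟨M, hM⟩ := hbdd
  have hM0 : 0 ≤ M := (abs_nonneg _).trans (hM 0)
  have hσpos : 0 < σ := by rw [hσ]; positivity
  have hσvpos : 0 < σε * σθ / σ := by positivity
  have hstdm : Measurable stdPdf := continuous_stdPdf.measurable
  set F : ℝ → ℝ → ℝ := fun v x =>
    (p - r v) * (stdPdf ((v - x) / σε) / σε) * (stdPdf ((θ - v) / σθ) / σθ) with hFdef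
  -- integrability of the σε-Gaussian in x, for fixed v
  have hgε : ∀ v : ℝ, Integrable (fun x => stdPdf ((v - x) / σε) / σε) := by
    intro v
    have harg : ∀ x : ℝ, (v - x) / σε = -σε⁻¹ * x + v / σε := by
      intro x; field_simp; ring
    simp_rw [harg]
    exact (integrable_comp_affine integrable_stdPdf _ (by simp [hσε.ne'])).div_const σε
  -- integrability of the σθ-Gaussian in v
  have hgθ : Integrable (fun v => stdPdf ((θ - v) / σθ) / σθ) := by
    have harg : ∀ v : ℝ, (θ - v) / σθ = -σθ⁻¹ * v + θ / σθ := by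
      intro v; field_simp; ring
    simp_rw [harg]
    exact (integrable_comp_affine integrable_stdPdf _ (by simp [hσθ.ne'])).div_const σθ
  have hgθ_nonneg : ∀ v : ℝ, 0 ≤ stdPdf ((θ - v) / σθ) / σθ :=
    fun v => div_nonneg (stdPdf_pos _).le hσθ.le
  -- step B : inner integral in x
  have hinner1 : ∀ v, ∫ x in Ioi c, F v x =
      (p - r v) * stdCdf ((v - c) / σε) * (stdPdf ((θ - v) / σθ) / σθ) := by
    intro v
    simp only [hFdef]
    rw [integral_mul_const, integral_const_mul, ← stdCdf_eq_setIntegral hσε v c]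
  have hprof : profit θ σε σθ p r c = ∫ v, ∫ x in Ioi c, F v x := by
    rw [profit]
    congr 1; funext v
    rw [hinner1 v]; ring
  -- measurability of uncurried F
  have hmeasF : Measurable (Function.uncurry F) := by
    have : Function.uncurry F = fun q : ℝ × ℝ =>
        (p - r q.1) * (stdPdf ((q.1 - q.2) / σε) / σε) *
          (stdPdf ((θ - q.1) / σθ) / σθ) := rfl
    rw [this]
    exact ((measurable_const.sub (hmeas.comp measurable_fst)).mul
        ((hstdm.comp ((measurable_fst.sub measurable_snd).div_const σε)).div_const σε)).mul
      ((hstdm.comp ((measurable_const.sub measurable_fst).div_const σθ)).div_const σθ)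
  -- norm of F
  have hnorm : ∀ v x, ‖F v x‖ =
      |p - r v| * (stdPdf ((v - x) / σε) / σε) * (stdPdf ((θ - v) / σθ) / σθ) := by
    intro v x
    simp only [hFdef, Real.norm_eq_abs, abs_mul]
    rw [abs_of_nonneg (div_nonneg (stdPdf_pos _).le hσε.le),
      abs_of_nonneg (hgθ_nonneg v)]
  -- product integrability
  have hIF : Integrable (Function.uncurry F)
      ((volume : Measure ℝ).prod (volume.restrict (Ioi c))) := by
    rw [integrable_prod_iff hmeasF.aestronglyMeasurable]
    constructor
    · refine ae_of_all _ fun v => ?_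
      show Integrable (fun x => F v x) (volume.restrict (Ioi c))
      simp only [hFdef]
      exact (((hgε v).const_mul _).mul_const _).integrableOn
    · have hbnd : Integrable (fun v => (|p| + M) * (stdPdf ((θ - v) / σθ) / σθ)) :=
        hgθ.const_mul _
      refine hbnd.mono' ((hmeasF.aestronglyMeasurable.norm).integral_prod_right') ?_
      refine ae_of_all _ fun v => ?_
      show ‖∫ x in Ioi c, ‖F v x‖‖ ≤ (|p| + M) * (stdPdf ((θ - v) / σθ) / σθ)
      have hval : ∫ x in Ioi c, ‖F v x‖ =
          |p - r v| * stdCdf ((v - c) / σε) * (stdPdf ((θ - v) / σθ) / σθ) := by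
        simp_rw [hnorm]
        rw [integral_mul_const, integral_const_mul, ← stdCdf_eq_setIntegral hσε v c]
      have hvn : 0 ≤ ∫ x in Ioi c, ‖F v x‖ :=
        integral_nonneg fun x => norm_nonneg _
      rw [Real.norm_eq_abs, abs_of_nonneg hvn, hval]
      have h1 : |p - r v| * stdCdf ((v - c) / σε) ≤ |p| + M := by
        have h2 : |p - r v| ≤ |p| + M :=
          (abs_sub p (r v)).trans (add_le_add le_rfl (hM v))
        calc |p - r v| * stdCdf ((v - c) / σε) ≤ (|p| + M) * 1 :=
              mul_le_mul h2 (stdCdf_le_one _) (stdCdf_nonneg _) (by positivity)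
          _ = |p| + M := mul_one _
      exact mul_le_mul_of_nonneg_right h1 (hgθ_nonneg v)
  -- rewrite postReward
  have hpost : ∀ x, postReward θ σε σθ r x =
      ∫ v, r v * (stdPdf ((v - (σθ ^ 2 / (σε ^ 2 + σθ ^ 2) * x +
        (1 - σθ ^ 2 / (σε ^ 2 + σθ ^ 2)) * θ)) / (σε * σθ / σ)) / (σε * σθ / σ)) := by
    intro x
    rw [postReward, ← hσ]
    simp_rw [mul_div_assoc]
  -- step E : inner integral in v
  have hinner2 : ∀ x, (∫ v, F v x) =
      (p - postReward θ σε σθ r x) * stdPdf ((θ - x) / σ) / σ := by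
    intro x
    set m : ℝ := σθ ^ 2 / (σε ^ 2 + σθ ^ 2) * x +
      (1 - σθ ^ 2 / (σε ^ 2 + σθ ^ 2)) * θ with hm
    have hFx : ∀ v, F v x =
        (p - r v) * (stdPdf ((v - m) / (σε * σθ / σ)) / (σε * σθ / σ)) *
          (stdPdf ((θ - x) / σ) / σ) := by
      intro v
      simp only [hFdef]
      rw [mul_assoc, gauss_prod hσε hσθ hσ x v, ← hm]
      ring
    have hD : Integrable (fun v => stdPdf ((v - m) / (σε * σθ / σ)) / (σε * σθ / σ)) :=
      integrable_gpdf hσvpos m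
    have hrD : Integrable (fun v =>
        r v * (stdPdf ((v - m) / (σε * σθ / σ)) / (σε * σθ / σ))) := by
      refine (hD.const_mul M).mono' ?_ (ae_of_all _ fun v => ?_)
      · exact (hmeas.mul ((hstdm.comp
          ((measurable_id.sub_const m).div_const _)).div_const _)).aestronglyMeasurable
      · rw [Real.norm_eq_abs, abs_mul,
          abs_of_nonneg (div_nonneg (stdPdf_pos _).le hσvpos.le)]
        exact mul_le_mul_of_nonneg_right (hM v)
          (div_nonneg (stdPdf_pos _).le hσvpos.le)
    simp_rw [hFx]
    rw [integral_mul_const]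
    have hsplit : ∫ v, (p - r v) *
        (stdPdf ((v - m) / (σε * σθ / σ)) / (σε * σθ / σ)) =
        (p * ∫ v, stdPdf ((v - m) / (σε * σθ / σ)) / (σε * σθ / σ)) -
          ∫ v, r v * (stdPdf ((v - m) / (σε * σθ / σ)) / (σε * σθ / σ)) := by
      simp_rw [sub_mul]
      rw [integral_sub (hD.const_mul p) hrD, integral_const_mul]
    rw [hsplit, integral_gpdf hσvpos, mul_one, hm, ← hpost x]
    ring
  rw [hprof, integral_integral_swap hIF]
  exact setIntegral_congr_fun measurableSet_Ioi fun x _ => hinner2 x
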